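/- arXiv:1908.00091 — 4 statements merged into one kernel-verified Lean document; each statement's English description precedes it below -/
import Mathlib

section
/- Let K be a field, M1 and M2 K-vector spaces, and B : M1 × M2 → K a K-bilinear map. Let U1, V1 be endomorphisms of M1 and U2, V2 endomorphisms of M2 with U1 ∘ V1 = id and U2 ∘ V2 = id. Let α1, β1, α2, β2, α3 ∈ K with α3 ≠ 0, and suppose that for all x ∈ M1, y ∈ M2: (i) B(V1 x, V2 y) = α3⁻¹ B(x, y); (ii) B(x, V2 y) = α3⁻¹ B(U1 x, y); (iii) B(V1 x, y) = α3⁻¹ B(x, U2 y). Fix v1 ∈ M1, v2 ∈ M2 with U_i v_i = (α_i + β_i) v_i − (α_i β_i) V_i v_i for i = 1, 2, and set v_{α_i} = v_i − β_i V_i v_i. If α3² ≠ α1 β1 α2 β2, then B(v_{α1}, v_{α2}) = [(1 − β1 α2 α3⁻¹)(1 − α1 β2 α3⁻¹)(1 − β1 β2 α3⁻¹) / (1 − α1 β1 α2 β2 α3⁻²)] · B(v1, v2). -/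
/-- Abstract local Euler factor computation for the triple product pairing. -/
theorem stmt3 (K : Type*) [Field K]
    (M1 M2 : Type*) [AddCommGroup M1] [Module K M1] [AddCommGroup M2] [Module K M2]
    (B : M1 →ₗ[K] M2 →ₗ[K] K)
    (U1 V1 : M1 →ₗ[K] M1) (U2 V2 : M2 →ₗ[K] M2)
    (hUV1 : U1.comp V1 = LinearMap.id) (hUV2 : U2.comp V2 = LinearMap.id)
    (α1 β1 α2 β2 α3 : K) (hα3 : α3 ≠ 0)
    (hrel1 : ∀ (x : M1) (y : M2), B (V1 x) (V2 y) = α3⁻¹ * B x y)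
    (hrel2 : ∀ (x : M1) (y : M2), B x (V2 y) = α3⁻¹ * B (U1 x) y)
    (hrel3 : ∀ (x : M1) (y : M2), B (V1 x) y = α3⁻¹ * B x (U2 y))
    (v1 : M1) (v2 : M2)
    (hv1 : U1 v1 = (α1 + β1) • v1 - (α1 * β1) • V1 v1)
    (hv2 : U2 v2 = (α2 + β2) • v2 - (α2 * β2) • V2 v2)
    (hne : α3 ^ 2 ≠ α1 * β1 * α2 * β2) :
    B (v1 - β1 • V1 v1) (v2 - β2 • V2 v2)
      = ((1 - β1 * α2 * α3⁻¹) * (1 - α1 * β2 * α3⁻¹) * (1 - β1 * β2 * α3⁻¹)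
          / (1 - α1 * β1 * α2 * β2 * (α3⁻¹) ^ 2)) * B v1 v2 := by
  set t : K := α3⁻¹ with ht
  set a : K := B v1 v2 with ha
  set p : K := B (V1 v1) v2 with hpdef
  set q : K := B v1 (V2 v2) with hqdef
  have hr : B (V1 v1) (V2 v2) = t * a := hrel1 v1 v2
  have hq : q = t * ((α1 + β1) * a - α1 * β1 * p) := by
    have := hrel2 v1 v2
    rw [hv1] at this
    simpa [map_sub, map_smul, smul_eq_mul, mul_sub, ha, hpdef] using this
  have hp : p = t * ((α2 + β2) * a - α2 * β2 * q) := by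
    have := hrel3 v1 v2
    rw [hv2] at this
    simpa [map_sub, map_smul, smul_eq_mul, mul_sub, ha, hqdef] using this
  have hD : 1 - α1 * β1 * α2 * β2 * t ^ 2 ≠ 0 := by
    have key : α3 ^ 2 * (1 - α1 * β1 * α2 * β2 * t ^ 2) = α3 ^ 2 - α1 * β1 * α2 * β2 := by
      rw [ht]; field_simp
    intro h
    rw [h, mul_zero] at key
    exact hne (sub_eq_zero.mp key.symm)
  have hp2 : (1 - α1 * β1 * α2 * β2 * t ^ 2) * p
      = (t * (α2 + β2) - t ^ 2 * α2 * β2 * (α1 + β1)) * a := by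
    linear_combination hp - (t * α2 * β2) * hq
  have hq2 : (1 - α1 * β1 * α2 * β2 * t ^ 2) * q
      = (t * (α1 + β1) - t ^ 2 * α1 * β1 * (α2 + β2)) * a := by
    linear_combination hq - (t * α1 * β1) * hp
  have lhs_eq : B (v1 - β1 • V1 v1) (v2 - β2 • V2 v2)
      = a - β2 * q - β1 * p + β1 * β2 * (t * a) := by
    simp only [map_sub, map_smul, LinearMap.sub_apply, LinearMap.smul_apply,
      smul_eq_mul, hr, ← ha, ← hpdef, ← hqdef]
    ring
  rw [lhs_eq, div_mul_eq_mul_div, eq_div_iff hD]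
  linear_combination (-β1) * hp2 + (-β2) * hq2
end

section
/- With the notation and hypotheses of the previous abstract Euler factor setting (bilinear B : M1 × M2 → K, operators U_i, V_i with U_i V_i = id, relations (i)-(iii) with scalar α3 ≠ 0, and U-eigenvector decomposition data (α_i, β_i) for v_i), set v_{α1} = v1 − β1 V1 v1, v_{α2} = v2 − β2 V2 v2, and define the depletion v_{α1}^{[p]} = v_{α1} − V1(U1 v_{α1}). Then B(v_{α1}^{[p]}, v_{α2}) = (1 − α1 α2 α3⁻¹) · B(v_{α1}, v_{α2}). -/
/-- Effect of p-depletion on the triple product pairing. -/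
theorem stmt4 (K : Type*) [Field K]
    (M1 M2 : Type*) [AddCommGroup M1] [Module K M1] [AddCommGroup M2] [Module K M2]
    (B : M1 →ₗ[K] M2 →ₗ[K] K)
    (U1 V1 : M1 →ₗ[K] M1) (U2 V2 : M2 →ₗ[K] M2)
    (hUV1 : U1.comp V1 = LinearMap.id) (hUV2 : U2.comp V2 = LinearMap.id)
    (α1 β1 α2 β2 α3 : K) (hα3 : α3 ≠ 0)
    (hrel1 : ∀ (x : M1) (y : M2), B (V1 x) (V2 y) = α3⁻¹ * B x y)
    (hrel2 : ∀ (x : M1) (y : M2), B x (V2 y) = α3⁻¹ * B (U1 x) y)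
    (hrel3 : ∀ (x : M1) (y : M2), B (V1 x) y = α3⁻¹ * B x (U2 y))
    (v1 : M1) (v2 : M2)
    (hv1 : U1 v1 = (α1 + β1) • v1 - (α1 * β1) • V1 v1)
    (hv2 : U2 v2 = (α2 + β2) • v2 - (α2 * β2) • V2 v2) :
    B ((v1 - β1 • V1 v1) - V1 (U1 (v1 - β1 • V1 v1))) (v2 - β2 • V2 v2)
      = (1 - α1 * α2 * α3⁻¹) * B (v1 - β1 • V1 v1) (v2 - β2 • V2 v2) := by
  have hUV1' : U1 (V1 v1) = v1 := LinearMap.congr_fun hUV1 v1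
  have hUV2' : U2 (V2 v2) = v2 := LinearMap.congr_fun hUV2 v2
  have h1 : U1 (v1 - β1 • V1 v1) = α1 • (v1 - β1 • V1 v1) := by
    rw [map_sub, map_smul, hv1, hUV1']
    module
  have h2 : U2 (v2 - β2 • V2 v2) = α2 • (v2 - β2 • V2 v2) := by
    rw [map_sub, map_smul, hv2, hUV2']
    module
  have key : B (V1 (v1 - β1 • V1 v1)) (v2 - β2 • V2 v2)
      = α2 * α3⁻¹ * B (v1 - β1 • V1 v1) (v2 - β2 • V2 v2) := by
    rw [hrel3, h2, map_smul, smul_eq_mul]; ring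
  have expand : ∀ (a b : M1) (y : M2), B (a - α1 • b) y = B a y - α1 * B b y := by
    intro a b y; simp
  rw [h1, map_smul, expand, key]
  ring
end

section
/- Let R be a commutative ring, D : R → R a derivation extended coefficientwise to R[X], c ∈ R, and for an integer k let ∇_k f = D f − (X² − c) f′ + k X f on R[X]. For j ≥ 1 set ∇_k^j := ∇_{k+2(j−1)} ∘ ⋯ ∘ ∇_{k+2} ∘ ∇_k (and ∇_k^0 = id). Then for every f ∈ R[X] with f′ = 0 (i.e., f a constant polynomial) and every j ≥ 1, one has (∇_k^j f)′ = j(k + j − 1) · ∇_k^{j−1} f. -/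
open Polynomial

/-- The Gauss–Manin connection in local coordinates, with integer weight. -/
noncomputable def nabla {R : Type*} [CommRing R]
    (Dp : R[X] → R[X]) (c : R) (K : ℤ) (f : R[X]) : R[X] :=
  Dp f - (X ^ 2 - C c) * derivative f + C ((K : ℤ) : R) * X * f

/-- Iterated connection `∇_k^j = ∇_{k+2(j-1)} ∘ ⋯ ∘ ∇_{k+2} ∘ ∇_k`. -/
noncomputable def nablaIter {R : Type*} [CommRing R]
    (Dp : R[X] → R[X]) (c : R) (k : ℤ) : ℕ → R[X] → R[X]
  | 0, f => f
  | j + 1, f => nabla Dp c (k + 2 * j) (nablaIter Dp c k j f)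

/-!
The derivation `D` kills integers, so applied coefficientwise it is `ℤ`-linear and commutes with
`d/dX`. Differentiating `∇_K g` then gives the commutation relation `(∇_K g)' = ∇_{K-2} g' + K g`.
Since `f' = 0`, induction on `j` shows `(∇_k^{j+1} f)' = (j+1)(k+j) ∇_k^j f`: applying the
relation to `g = ∇_k^{j+1} f` turns the induction hypothesis into
`(j+1)(k+j) ∇_k^{j+1} f + (k+2j+2) ∇_k^{j+1} f`, and `(j+1)(k+j) + k+2j+2 = (j+2)(k+j+1)`.
-/

def Derivation.ofAddLeibniz {R : Type*} [CommRing R] (D : R → R)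
    (hadd : ∀ x y, D (x + y) = D x + D y) (hmul : ∀ x y, D (x * y) = D x * y + x * D y) :
    Derivation ℤ R R :=
  Derivation.mk' (AddMonoidHom.mk' D hadd).toIntLinearMap fun x y => by
    simp [hmul, mul_comm, add_comm]

section CoeffwiseDerivation

variable {R : Type*} [CommRing R] (d : Derivation ℤ R R) {Dp : R[X] → R[X]}

theorem derivative_coeffwise_comm (hDp : ∀ (f : R[X]) (i : ℕ), (Dp f).coeff i = d (f.coeff i))
    (g : R[X]) : derivative (Dp g) = Dp (derivative g) := by
  ext i
  have hcast : ((i : R) + 1) = ((i + 1 : ℕ) : R) := by push_cast; rfl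
  simp only [coeff_derivative, hDp, d.leibniz, hcast, d.map_natCast, smul_eq_mul, zero_mul,
    add_zero, mul_comm]

theorem coeffwise_zsmul (hDp : ∀ (f : R[X]) (i : ℕ), (Dp f).coeff i = d (f.coeff i))
    (z : ℤ) (g : R[X]) : Dp (z • g) = z • Dp g := by
  ext i
  simp only [hDp, coeff_smul, d.map_smul]

end CoeffwiseDerivation

section Connection

variable {R : Type*} [CommRing R] {Dp : R[X] → R[X]} (c : R)

theorem derivative_nabla (hDp : ∀ g, derivative (Dp g) = Dp (derivative g)) (K : ℤ)
    (g : R[X]) :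
    derivative (nabla Dp c K g) = nabla Dp c (K - 2) (derivative g) + K • g := by
  simp only [nabla, C_eq_intCast, hDp, derivative_add, derivative_sub, derivative_mul,
    derivative_X_pow, derivative_C, derivative_X, derivative_intCast, C_eq_natCast, zsmul_eq_mul]
  push_cast
  ring

theorem nabla_zsmul (hDp : ∀ (z : ℤ) g, Dp (z • g) = z • Dp g) (K z : ℤ) (g : R[X]) :
    nabla Dp c K (z • g) = z • nabla Dp c K g := by
  rw [nabla, nabla, hDp, derivative_smul]
  simp only [zsmul_eq_mul]
  ring

theorem nabla_zero (hDp : ∀ (z : ℤ) g, Dp (z • g) = z • Dp g) (K : ℤ) :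
    nabla Dp c K 0 = 0 := by
  simpa using nabla_zsmul c hDp K 0 0

theorem derivative_nablaIter_succ (hDp : ∀ g, derivative (Dp g) = Dp (derivative g))
    (hDpz : ∀ (z : ℤ) g, Dp (z • g) = z • Dp g) (k : ℤ) {f : R[X]} (hf : derivative f = 0)
    (j : ℕ) :
    derivative (nablaIter Dp c k (j + 1) f)
      = (((j : ℤ) + 1) * (k + j)) • nablaIter Dp c k j f := by
  induction j with
  | zero =>
    simp [nablaIter, derivative_nabla c hDp, hf, nabla_zero c hDpz]
  | succ j ih =>
    have hweight : k + 2 * ((j + 1 : ℕ) : ℤ) - 2 = k + 2 * (j : ℤ) := by push_cast; ring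
    rw [nablaIter, derivative_nabla c hDp, ih, nabla_zsmul c hDpz, hweight, ← nablaIter,
      ← add_smul]
    congr 1
    push_cast
    ring

end Connection

/-- `ε(∇^j f) = j(k+j-1) ∇^{j-1} f` for holomorphic (constant) `f`. -/
theorem stmt6 (R : Type*) [CommRing R] (D : R → R)
    (hadd : ∀ x y, D (x + y) = D x + D y)
    (hmul : ∀ x y, D (x * y) = D x * y + x * D y)
    (Dp : R[X] → R[X])
    (hDp : ∀ (f : R[X]) (i : ℕ), (Dp f).coeff i = D (f.coeff i))
    (c : R) (k : ℤ) (f : R[X]) (hf : derivative f = 0)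
    (j : ℕ) (hj : 1 ≤ j) :
    derivative (nablaIter Dp c k j f)
      = ((j : ℤ) * (k + (j : ℤ) - 1)) • nablaIter Dp c k (j - 1) f := by
  let d := Derivation.ofAddLeibniz D hadd hmul
  have hDp' : ∀ (f : R[X]) (i : ℕ), (Dp f).coeff i = d (f.coeff i) := hDp
  obtain ⟨i, rfl⟩ := Nat.exists_eq_add_of_le' hj
  rw [derivative_nablaIter_succ c (derivative_coeffwise_comm d hDp')
    (coeffwise_zsmul d hDp') k hf i, Nat.add_sub_cancel]
  congr 1
  push_cast
  ring
end

section
/- Let A be a commutative ring containing ℚ, and let M = ⊕_{k ∈ ℤ} M_k be a ℤ-graded commutative A-algebra. Let ∇, ε be A-linear derivations of M (ε(xy) = ε(x)y + xε(y), and similarly for ∇) with ∇(M_k) ⊆ M_{k+2}, ε(M_k) ⊆ M_{k−2}, and (ε∘∇ − ∇∘ε)(x) = k • x for all x ∈ M_k. Let k1, k2 ≥ 1 be integers, m3 ≥ 0, set m = k1 + k2 + m3, and let c_j = (−1)^j C(m3, j) C(m − 2, k1 + j − 1) for 0 ≤ j ≤ m3. Then for any f1 ∈ M_{k1}, f2 ∈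 M_{k2} with ε f1 = 0 and ε f2 = 0, one has ε( Σ_{j=0}^{m3} c_j · ∇^j(f1) · ∇^{m3−j}(f2) ) = 0. -/
/-- The trilinear product of two holomorphic forms is holomorphic:
abstract graded-algebra formulation. -/
theorem stmt13 (A : Type*) [CommRing A] [Algebra ℚ A]
    (M : Type*) [CommRing M] [Algebra A M]
    (𝒜 : ℤ → Submodule A M) [GradedAlgebra 𝒜]
    (nab eps : Module.End A M)
    (hnab_mul : ∀ x y : M, nab (x * y) = nab x * y + x * nab y)
    (heps_mul : ∀ x y : M, eps (x * y) = eps x * y + x * eps y)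
    (hnab_deg : ∀ (k : ℤ) (x : M), x ∈ 𝒜 k → nab x ∈ 𝒜 (k + 2))
    (heps_deg : ∀ (k : ℤ) (x : M), x ∈ 𝒜 k → eps x ∈ 𝒜 (k - 2))
    (hcomm : ∀ (k : ℤ) (x : M), x ∈ 𝒜 k → eps (nab x) - nab (eps x) = k • x)
    (k1 k2 : ℕ) (hk1 : 1 ≤ k1) (hk2 : 1 ≤ k2) (m3 : ℕ)
    (m : ℕ) (hm : m = k1 + k2 + m3)
    (c : ℕ → ℤ)
    (hc : ∀ j, j ≤ m3 →
      c j = (-1) ^ j * (Nat.choose m3 j : ℤ) * (Nat.choose (m - 2) (k1 + j - 1) : ℤ))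
    (f1 f2 : M) (hf1 : f1 ∈ 𝒜 (k1 : ℤ)) (hf2 : f2 ∈ 𝒜 (k2 : ℤ))
    (hef1 : eps f1 = 0) (hef2 : eps f2 = 0) :
    eps (∑ j ∈ Finset.range (m3 + 1),
      c j • ((nab ^ j) f1 * (nab ^ (m3 - j)) f2)) = 0 := by
  have hmem : ∀ (k : ℤ) (f : M), f ∈ 𝒜 k → ∀ j : ℕ, (nab ^ j) f ∈ 𝒜 (k + 2 * j) := by
    intro k f hf j
    induction j with
    | zero => simpa using hf
    | succ j ih =>
      have h := hnab_deg _ _ ih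
      have h2 : (nab ^ (j+1)) f = nab ((nab ^ j) f) := by
        rw [pow_succ']; rfl
      rw [h2]
      convert h using 2
      push_cast
      ring
  have keylem : ∀ (k : ℤ) (f : M), f ∈ 𝒜 k → eps f = 0 → ∀ j : ℕ,
      eps ((nab ^ j) f) = ((j : ℤ) * (k + (j : ℤ) - 1)) • (nab ^ (j - 1)) f := by
    intro k f hf hef j
    induction j with
    | zero => simpa using hef
    | succ j ih =>
      have h2 : (nab ^ (j+1)) f = nab ((nab ^ j) f) := by rw [pow_succ']; rfl
      have hcom := hcomm (k + 2 * j) ((nab ^ j) f) (hmem k f hf j)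
      have hstep : eps (nab ((nab ^ j) f))
          = (k + 2 * (j : ℤ)) • (nab ^ j) f + nab (eps ((nab ^ j) f)) :=
        eq_add_of_sub_eq hcom
      rw [h2, hstep, ih, map_zsmul]
      cases j with
      | zero => simp
      | succ i =>
        have h3 : nab ((nab ^ (i + 1 - 1)) f) = (nab ^ (i + 1)) f := by
          rw [pow_succ']
          simp [Module.End.mul_apply]
        rw [h3, ← add_smul]
        congr 1
        push_cast
        ring
  have hterm : ∀ j : ℕ,
      eps (c j • ((nab ^ j) f1 * (nab ^ (m3 - j)) f2)) =
        (c j * (j : ℤ) * ((k1 : ℤ) + (j : ℤ) - 1)) •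
            ((nab ^ (j - 1)) f1 * (nab ^ (m3 - j)) f2)
        + (c j * ((m3 - j : ℕ) : ℤ) * ((k2 : ℤ) + ((m3 - j : ℕ) : ℤ) - 1)) •
            ((nab ^ j) f1 * (nab ^ (m3 - j - 1)) f2) := by
    intro j
    rw [map_zsmul, heps_mul, keylem _ _ hf1 hef1 j, keylem _ _ hf2 hef2 (m3 - j),
      smul_mul_assoc, mul_smul_comm, smul_add, smul_smul, smul_smul]
    congr 2 <;> ring
  -- coefficient identity
  have hcoeff : ∀ n : ℕ, n < m3 →
      c (n + 1) * ((n : ℤ) + 1) * ((k1 : ℤ) + ((n : ℤ) + 1) - 1)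
        + c n * ((m3 - n : ℕ) : ℤ) * ((k2 : ℤ) + ((m3 - n : ℕ) : ℤ) - 1) = 0 := by
    intro n hn
    obtain ⟨K, rfl⟩ : ∃ K, k1 = K + 1 := ⟨k1 - 1, by omega⟩
    obtain ⟨L, rfl⟩ : ∃ L, k2 = L + 1 := ⟨k2 - 1, by omega⟩
    subst hm
    rw [hc n (by omega), hc (n+1) (by omega)]
    have hm2 : K + 1 + (L + 1) + m3 - 2 = K + L + m3 := by omega
    have hi1 : K + 1 + (n + 1) - 1 = K + n + 1 := by omega
    have hi0 : K + 1 + n - 1 = K + n := by omega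
    rw [hm2, hi1, hi0]
    have e1 := Nat.choose_succ_right_eq m3 n
    zify [hn.le] at e1
    have e2 := Nat.choose_succ_right_eq (K + L + m3) (K + n)
    zify [show K + n ≤ K + L + m3 by omega] at e2
    push_cast [Nat.cast_sub hn.le]
    linear_combination ((-1 : ℤ)) ^ (n + 1) * ((Nat.choose (K + L + m3) (K + n + 1) : ℤ))
        * ((K : ℤ) + n + 1) * e1
      + ((-1 : ℤ)) ^ (n + 1) * ((Nat.choose m3 n : ℤ)) * ((m3 : ℤ) - n) * e2
  -- now assemble
  rw [map_sum]
  rw [Finset.sum_congr rfl (fun j _ => hterm j)]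
  rw [Finset.sum_add_distrib]
  rw [Finset.sum_range_succ' (fun j => (c j * (j : ℤ) * ((k1 : ℤ) + (j : ℤ) - 1)) •
        ((nab ^ (j - 1)) f1 * (nab ^ (m3 - j)) f2))]
  rw [Finset.sum_range_succ]
  simp only [Nat.cast_zero, mul_zero, zero_mul, zero_smul, add_zero, Nat.sub_self,
    Int.natCast_zero]
  rw [← Finset.sum_add_distrib]
  apply Finset.sum_eq_zero
  intro j hj
  have hjm : j < m3 := Finset.mem_range.mp hj
  have hsub : m3 - (j + 1) = m3 - j - 1 := by omega
  have hsub2 : j + 1 - 1 = j := by omega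
  rw [hsub, hsub2, ← add_smul]
  push_cast
  rw [show (c (j+1) * ((j:ℤ)+1) * ((k1:ℤ) + ((j:ℤ)+1) - 1)
      + c j * ((m3 - j : ℕ) : ℤ) * ((k2:ℤ) + ((m3 - j : ℕ) : ℤ) - 1)) = 0 from hcoeff j hjm]
  exact zero_smul _ _
end
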